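/- arXiv:2603.23476 — 5 statements merged into one kernel-verified Lean document; each statement's English description precedes it below -/
import Mathlib

section
/- For $p \in (0,1]$, $\tau \ge 0$, $g > 0$, the function $J(\Delta) = \frac{\Delta}{2} + \frac{1}{2p} + \frac{\tau g + \frac{1-p}{2p}}{p(\Delta-1)+1}$ on $[1,\infty)$ attains its minimum at $\Delta^* = \max\left\{1,\; 1 + \frac{\sqrt{1 - p + 2p\tau g} - 1}{p}\right\}$. -/
/-!
Substituting `u = p (Δ - 1) + 1`, which maps `[1, ∞)` increasingly onto itself, turns the cost into
`J = 1/2 + (u + k / u) / (2p)` with `k = 1 - p + 2pτg`. On `[1, ∞)` the function `u + k / u` is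
minimised at `u = max 1 √k`: for `k ≥ 1` this is AM-GM, `u + k / u - 2√k = (u - √k)² / u`, and for
`k ≤ 1` the function is increasing, `u + k / u - (1 + k) = (u - 1)(u - k) / u`. Pulling `max 1 √k`
back through the substitution gives `Δ*`.
-/

open Set

theorem isMinOn_add_div_Ici_one (k : ℝ) :
    IsMinOn (fun u : ℝ => u + k / u) (Ici 1) (max 1 √k) := by
  intro u (hu : 1 ≤ u)
  have hu0 : 0 < u := by linarith
  rcases le_total k 1 with hk | hk
  · rw [max_eq_left (Real.sqrt_le_one.mpr hk)]
    have key : (u + k / u) - (1 + k / 1) = (u - 1) * (u - k) / u := by field_simp; ring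
    show 1 + k / 1 ≤ u + k / u
    rw [← sub_nonneg, key]
    exact div_nonneg (mul_nonneg (by linarith) (by linarith)) hu0.le
  · set s := √k
    have hs1 : 1 ≤ s := Real.one_le_sqrt.mpr hk
    have hks : k = s ^ 2 := (Real.sq_sqrt (by linarith)).symm
    rw [max_eq_right hs1]
    have key : (u + k / u) - (s + k / s) = (u - s) ^ 2 / u := by
      rw [hks]; field_simp; ring
    show s + k / s ≤ u + k / u
    rw [← sub_nonneg, key]
    positivity

section Reparametrization

variable {p : ℝ}

theorem monotone_mul_sub_one_add_one (hp : 0 < p) : Monotone fun Δ : ℝ => p * (Δ - 1) + 1 :=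
  fun _ _ h => by nlinarith

theorem mapsTo_mul_sub_one_add_one_Ici_one (hp : 0 < p) :
    MapsTo (fun Δ : ℝ => p * (Δ - 1) + 1) (Ici 1) (Ici 1) := fun Δ (h : 1 ≤ Δ) =>
  show 1 ≤ p * (Δ - 1) + 1 by nlinarith

theorem mul_max_one_sub_one_add_one (hp : 0 < p) (s : ℝ) :
    p * (max 1 (1 + (s - 1) / p) - 1) + 1 = max 1 s := by
  rw [(monotone_mul_sub_one_add_one hp).map_max]
  congr 1
  · ring
  · field_simp; ring

end Reparametrization

theorem stmt_3_general (p τ g : ℝ) (hp0 : 0 < p) :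
    IsMinOn
      (fun Δ : ℝ => Δ / 2 + 1 / (2 * p) + (τ * g + (1 - p) / (2 * p)) / (p * (Δ - 1) + 1))
      (Set.Ici (1 : ℝ))
      (max 1 (1 + (Real.sqrt (1 - p + 2 * p * τ * g) - 1) / p)) := by
  set k := 1 - p + 2 * p * τ * g
  have hc : τ * g + (1 - p) / (2 * p) = k / (2 * p) := by
    field_simp; ring
  have hJ : (fun Δ : ℝ => Δ / 2 + 1 / (2 * p) + k / (2 * p) / (p * (Δ - 1) + 1)) =
      (fun y => 1 / 2 + y / (2 * p)) ∘ (fun u => u + k / u) ∘ fun Δ => p * (Δ - 1) + 1 := by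
    funext Δ
    have hlin : Δ / 2 + 1 / (2 * p) = 1 / 2 + (p * (Δ - 1) + 1) / (2 * p) := by
      field_simp; ring
    simp only [Function.comp, hlin, add_div (p * (Δ - 1) + 1), div_right_comm k]
    ring
  have hscale : Monotone fun y : ℝ => 1 / 2 + y / (2 * p) :=
    fun _ _ h => by simp only; gcongr
  rw [hc, hJ]
  exact ((isMinOn_add_div_Ici_one k).comp_mapsTo (mapsTo_mul_sub_one_add_one_Ici_one hp0)
    (mul_max_one_sub_one_add_one hp0 _)).comp_mono hscale

/-- The threshold-policy average cost `J` attains its minimum over `[1,∞)` at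
`Δ* = max{1, 1 + (√(1 - p + 2pτg) - 1)/p}`. -/
theorem stmt_3 (p τ g : ℝ) (hp0 : 0 < p) (hp1 : p ≤ 1) (hτ : 0 ≤ τ) (hg : 0 < g) :
    IsMinOn
      (fun Δ : ℝ => Δ / 2 + 1 / (2 * p) + (τ * g + (1 - p) / (2 * p)) / (p * (Δ - 1) + 1))
      (Set.Ici (1 : ℝ))
      (max 1 (1 + (Real.sqrt (1 - p + 2 * p * τ * g) - 1) / p)) :=
  stmt_3_general p τ g hp0
end

section
/- Fix $p \in (0,1]$ and $g > 0$, and let $J(\Delta,\tau) = \frac{\Delta}{2} + \frac{1}{2p} + \frac{\tau g + \frac{1-p}{2p}}{p(\Delta-1)+1}$. For each positive integer $s$, the unique $\tau \ge 0$ solving $J(s,\tau) = J(s+1,\tau)$ is $\tau_{\mathrm{eq}}(s) = \frac{s\,(p s - p + 2)}{2g}$. -/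
/-! Only the last summand of `J` depends on `τ`, and moving the threshold from `s` to `s + 1`
raises its denominator `d = p (s - 1) + 1` by `p`. Since `c / d - c / (d + p) = p c / (d (d + p))`,
the linear gain `1/2` balances the saving exactly when `2 p c = d (d + p)`, which is linear in `τ`. -/

lemma div_eq_half_add_div_iff {c d e : ℝ} (hd : d ≠ 0) (he : e ≠ 0) :
    c / d = 1 / 2 + c / e ↔ 2 * c * (e - d) = d * e := by
  rw [div_add_div _ _ two_ne_zero he, div_eq_div_iff hd (mul_ne_zero two_ne_zero he)]
  constructor <;> intro h <;> linear_combination h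

theorem stmt_5_general (p g : ℝ) (hp0 : 0 < p) (hg : 0 < g)
    (J : ℝ → ℝ → ℝ)
    (hJ : ∀ Δ τ : ℝ, J Δ τ = Δ / 2 + 1 / (2 * p) + (τ * g + (1 - p) / (2 * p)) / (p * (Δ - 1) + 1))
    (s : ℕ) (hs : 1 ≤ s) :
    ∀ τ : ℝ, 0 ≤ τ → (J (s : ℝ) τ = J ((s : ℝ) + 1) τ ↔ τ = (s : ℝ) * (p * s - p + 2) / (2 * g)) := by
  intro τ _
  have hs1 : (0 : ℝ) ≤ s - 1 := sub_nonneg.mpr (mod_cast hs)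
  have hd : p * ((s : ℝ) - 1) + 1 ≠ 0 := by positivity
  have he : p * ((s : ℝ) + 1 - 1) + 1 ≠ 0 := by rw [add_sub_cancel_right]; positivity
  set c := τ * g + (1 - p) / (2 * p)
  calc J s τ = J (s + 1) τ
      ↔ c / (p * (s - 1) + 1) = 1 / 2 + c / (p * (s + 1 - 1) + 1) := by
        rw [hJ, hJ]; constructor <;> intro h <;> linarith
    _ ↔ 2 * c * p = (p * (s - 1) + 1) * (p * (s + 1 - 1) + 1) := by
        rw [div_eq_half_add_div_iff hd he]; ring_nf
    _ ↔ p * (τ * (2 * g)) = p * (s * (p * s - p + 2)) := by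
        have hc : 2 * c * p = 2 * τ * g * p + (1 - p) := by
          simp only [c]; field_simp
        rw [hc]
        constructor <;> intro h <;> linear_combination h
    _ ↔ τ * (2 * g) = s * (p * s - p + 2) := mul_right_inj' hp0.ne'
    _ ↔ τ = s * (p * s - p + 2) / (2 * g) := (eq_div_iff (by positivity)).symm

/-- The unique `τ ≥ 0` at which thresholds `s` and `s+1` have equal average
cost is `τ_eq(s) = s(ps - p + 2)/(2g)` (the Whittle index times the cardinality). -/
theorem stmt_5 (p g : ℝ) (hp0 : 0 < p) (hp1 : p ≤ 1) (hg : 0 < g)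
    (J : ℝ → ℝ → ℝ)
    (hJ : ∀ Δ τ : ℝ, J Δ τ = Δ / 2 + 1 / (2 * p) + (τ * g + (1 - p) / (2 * p)) / (p * (Δ - 1) + 1))
    (s : ℕ) (hs : 1 ≤ s) :
    ∀ τ : ℝ, 0 ≤ τ → (J (s : ℝ) τ = J ((s : ℝ) + 1) τ ↔ τ = (s : ℝ) * (p * s - p + 2) / (2 * g)) :=
  stmt_5_general p g hp0 hg J hJ s hs
end

section
/- Let $0<p\le 1$, $\tau \ge 0$, $g>0$, and let $J(\Delta,\tau) = \frac{\Delta}{2} + \frac{1}{2p} + \frac{\tau g + \frac{1-p}{2p}}{p(\Delta-1)+1}$. If for some integers $1 \le \Delta_1 \le \Delta_2$ and some $\tau_2 \ge 0$ we have $J(\Delta_2,\tau_2) \le J(\Delta_1,\tau_2)$, then for every $\tau_1 \ge \tau_2$ we have $J(\Delta_2,\tau_1) \le J(\Delta_1,\tau_1)$. -/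
/-- If a larger threshold `Δ₂` has average cost at most that of a smaller
threshold `Δ₁` at multiplier `τ₂`, then the same holds at every `τ₁ ≥ τ₂`. -/
theorem stmt_8 (p g : ℝ) (hp0 : 0 < p) (hp1 : p ≤ 1) (hg : 0 < g)
    (J : ℝ → ℝ → ℝ)
    (hJ : ∀ Δ τ : ℝ, J Δ τ = Δ / 2 + 1 / (2 * p) + (τ * g + (1 - p) / (2 * p)) / (p * (Δ - 1) + 1))
    (Δ₁ Δ₂ : ℕ) (h1 : 1 ≤ Δ₁) (h12 : Δ₁ ≤ Δ₂)
    (τ₂ : ℝ) (hτ₂ : 0 ≤ τ₂)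
    (h : J (Δ₂ : ℝ) τ₂ ≤ J (Δ₁ : ℝ) τ₂) :
    ∀ τ₁ : ℝ, τ₂ ≤ τ₁ → J (Δ₂ : ℝ) τ₁ ≤ J (Δ₁ : ℝ) τ₁ := by
  intro τ₁ hτ
  have h1' : (1 : ℝ) ≤ (Δ₁ : ℝ) := by exact_mod_cast h1
  have h12' : (Δ₁ : ℝ) ≤ (Δ₂ : ℝ) := by exact_mod_cast h12
  have hd1 : 0 < p * ((Δ₁ : ℝ) - 1) + 1 := by nlinarith
  have hd2 : 0 < p * ((Δ₂ : ℝ) - 1) + 1 := by nlinarith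
  have hdle : p * ((Δ₁ : ℝ) - 1) + 1 ≤ p * ((Δ₂ : ℝ) - 1) + 1 := by nlinarith
  rw [hJ, hJ] at h ⊢
  have key : (τ₁ * g + (1 - p) / (2 * p)) / (p * ((Δ₂ : ℝ) - 1) + 1)
      - (τ₂ * g + (1 - p) / (2 * p)) / (p * ((Δ₂ : ℝ) - 1) + 1)
      ≤ (τ₁ * g + (1 - p) / (2 * p)) / (p * ((Δ₁ : ℝ) - 1) + 1)
      - (τ₂ * g + (1 - p) / (2 * p)) / (p * ((Δ₁ : ℝ) - 1) + 1) := by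
    rw [div_sub_div_same, div_sub_div_same]
    have hnum : 0 ≤ τ₁ * g + (1 - p) / (2 * p) - (τ₂ * g + (1 - p) / (2 * p)) := by
      have : 0 ≤ (τ₁ - τ₂) * g := mul_nonneg (by linarith) hg.le
      nlinarith
    exact div_le_div_of_nonneg_left hnum hd1 hdle
  linarith
end

section
/- Let $\mathcal{S} = \{1,2,\dots\}$, $p \in (0,1]$, $\tau \ge 0$, $g \ge 0$, $\alpha \in (0,1)$, and let $V:\mathcal{S}\to\mathbb{R}$ be nondecreasing. Define $Q_0(s) = s + \alpha V(s+1)$ and $Q_1(s) = s + \tau g + \alpha(p V(1) + (1-p)V(s+1))$. Then the advantage $Q_1(s) - Q_0(s)$ is nonincreasing in $s$; consequently, if $Q_1(s) \le Q_0(s)$ then $Q_1(s+x) \le Q_0(s+x)$ for every integer $x \ge 0$. -/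
/-- Threshold structure (Lemma 2): for a nondecreasing value function `V`, the
advantage `Q₁(s) - Q₀(s)` of the active over the passive action is nonincreasing
in `s`; hence if the active action is optimal at `s` it remains optimal at all
larger states. -/
theorem stmt_10 (p τ g α : ℝ) (hp0 : 0 < p) (hp1 : p ≤ 1) (hτ : 0 ≤ τ) (hg : 0 ≤ g)
    (hα0 : 0 < α) (hα1 : α < 1)
    (V : ℕ → ℝ) (hV : ∀ s s' : ℕ, 1 ≤ s → s ≤ s' → V s ≤ V s')
    (Q0 Q1 : ℕ → ℝ)
    (hQ0 : ∀ s : ℕ, Q0 s = (s : ℝ) + α * V (s + 1))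
    (hQ1 : ∀ s : ℕ, Q1 s = (s : ℝ) + τ * g + α * (p * V 1 + (1 - p) * V (s + 1))) :
    (∀ s s' : ℕ, 1 ≤ s → s ≤ s' → Q1 s' - Q0 s' ≤ Q1 s - Q0 s) ∧
    (∀ s : ℕ, 1 ≤ s → Q1 s ≤ Q0 s → ∀ x : ℕ, Q1 (s + x) ≤ Q0 (s + x)) := by
  have key : ∀ s s' : ℕ, 1 ≤ s → s ≤ s' → Q1 s' - Q0 s' ≤ Q1 s - Q0 s := by
    intro s s' hs hss
    have hV' : V (1 + s) ≤ V (1 + s') := hV _ _ (by omega) (by omega)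
    rw [hQ0 s, hQ1 s, hQ0 s', hQ1 s']
    ring_nf
    nlinarith [mul_le_mul_of_nonneg_left hV' (mul_pos hα0 hp0).le]
  refine ⟨key, fun s hs h x => ?_⟩
  have := key s (s + x) hs (by omega)
  linarith
end

section
/- Let $0<p\le 1$, $g>0$, and for integer $s \ge 1$ let $J(\Delta,\tau) = \frac{\Delta}{2} + \frac{1}{2p} + \frac{\tau g + \frac{1-p}{2p}}{p(\Delta-1)+1}$. Then $J(s,\tau) < J(s+1,\tau)$ for all $0 \le \tau < \tau_{\mathrm{eq}}(s)$ and $J(s,\tau) > J(s+1,\tau)$ for all $\tau > \tau_{\mathrm{eq}}(s)$, where $\tau_{\mathrm{eq}}(s) = \frac{s(ps-p+2)}{2g}$. -/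
/-- Below the indifference multiplier `τ_eq(s) = s(ps-p+2)/(2g)` the smaller
threshold `s` is strictly better; above it, the larger threshold `s+1` is
strictly better. -/
theorem stmt_12 (p g : ℝ) (hp0 : 0 < p) (hp1 : p ≤ 1) (hg : 0 < g)
    (J : ℝ → ℝ → ℝ)
    (hJ : ∀ Δ τ : ℝ, J Δ τ = Δ / 2 + 1 / (2 * p) + (τ * g + (1 - p) / (2 * p)) / (p * (Δ - 1) + 1))
    (s : ℕ) (hs : 1 ≤ s) :
    (∀ τ : ℝ, 0 ≤ τ → τ < (s : ℝ) * (p * s - p + 2) / (2 * g) →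
      J (s : ℝ) τ < J ((s : ℝ) + 1) τ) ∧
    (∀ τ : ℝ, (s : ℝ) * (p * s - p + 2) / (2 * g) < τ →
      J ((s : ℝ) + 1) τ < J (s : ℝ) τ) := by
  have hs1 : (1 : ℝ) ≤ (s : ℝ) := by exact_mod_cast hs
  have hd1 : 0 < p * ((s : ℝ) - 1) + 1 := by nlinarith
  have hd2 : 0 < p * ((s : ℝ) + 1 - 1) + 1 := by nlinarith
  have key : ∀ τ : ℝ, J ((s : ℝ) + 1) τ - J (s : ℝ) τ =
      ((s : ℝ) * (p * s - p + 2) - τ * (2 * g)) * p /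
        (2 * ((p * ((s : ℝ) - 1) + 1) * (p * ((s : ℝ) + 1 - 1) + 1))) := by
    intro τ
    rw [hJ, hJ]
    field_simp
    ring
  constructor
  · intro τ hτ0 hτ
    rw [lt_div_iff₀ (by positivity)] at hτ
    rw [← sub_pos, key]
    apply div_pos (by nlinarith) (by positivity)
  · intro τ hτ
    rw [div_lt_iff₀ (by positivity)] at hτ
    have h := key τ
    have hneg : J ((s : ℝ) + 1) τ - J (s : ℝ) τ < 0 := by
      rw [h]; exact div_neg_of_neg_of_pos (by nlinarith) (by positivity)
    linarith
end
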